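/- Anchor irrelevance in dominance-solvable games: if the finite two-player game G is dominance solvable in n* steps (iterated elimination of strictly dominated actions terminates at step n* with each R^{n*}_i a singleton), then for every anchor p, every order n ≥ 1, every level k ≥ n*, and every player i, the set of n-L-rationalizable actions of type θ_{i,k} equals R^n_i. -/

import Mathlib

open Finset

/-- A probability distribution (as weights) on a finite set. -/
def IsDist {B : Type} [Fintype B] (ν : B → ℝ) : Prop :=
  (∀ b, 0 ≤ ν b) ∧ ∑ b, ν b = 1

/-- `a` is a best reply to the conjecture `ν` (weights on the co-player's actions). -/
def isBR {A B : Type} [Fintype A] [Fintype B] (u : A → B → ℝ) (ν : B → ℝ) (a : A) : Prop :=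
  ∀ a' : A, ∑ b, ν b * u a' b ≤ ∑ b, ν b * u a b

/-- `a` is strictly dominated by some mixed action. -/
def Dominated {A B : Type} [Fintype A] [Fintype B] (u : A → B → ℝ) (a : A) : Prop :=
  ∃ α : A → ℝ, IsDist α ∧ ∀ b : B, (∑ a', α a' * u a' b) > u a b

/-- One step of iterated elimination: best replies (within `S`) to conjectures on `T`. -/
def BRstep {A B : Type} [Fintype A] [Fintype B] (u : A → B → ℝ) (S : Set A) (T : Set B) :
    Set A :=
  {a | a ∈ S ∧ ∃ ν : B → ℝ, IsDist ν ∧ (∀ b, ν b ≠ 0 → b ∈ T) ∧ isBR u ν a}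

/-- `n`-rationalizability in the complete-information game. -/
def Rseq {A B : Type} [Fintype A] [Fintype B] (u1 : A → B → ℝ) (u2 : B → A → ℝ) :
    ℕ → Set A × Set B
  | 0 => (Set.univ, Set.univ)
  | n + 1 =>
    (BRstep u1 (Rseq u1 u2 n).1 (Rseq u1 u2 n).2,
     BRstep u2 (Rseq u1 u2 n).2 (Rseq u1 u2 n).1)

/-- Best replies to conjectures concentrated on `T`. -/
def Lstep {A B : Type} [Fintype A] [Fintype B] (u : A → B → ℝ) (T : Set B) : Set A :=
  {a | ∃ ν : B → ℝ, IsDist ν ∧ (∀ b, ν b ≠ 0 → b ∈ T) ∧ isBR u ν a}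

/-- The classic level-k solution under anchor `(p1, p2)`; `Lk … k` is level-`k` behavior
(meaningful for `k ≥ 1`). -/
def Lk {A B : Type} [Fintype A] [Fintype B] (u1 : A → B → ℝ) (u2 : B → A → ℝ)
    (p1 : A → ℝ) (p2 : B → ℝ) : ℕ → Set A × Set B
  | 0 => (Set.univ, Set.univ)
  | 1 => ({a | isBR u1 p2 a}, {b | isBR u2 p1 b})
  | k + 2 =>
    (Lstep u1 (Lk u1 u2 p1 p2 (k + 1)).2,
     Lstep u2 (Lk u1 u2 p1 p2 (k + 1)).1)

/-- A Ĝ-conjecture over the co-player's (level-type, action) pairs: a finitely supported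
type-marginal together with conditional action distributions. -/
structure GConj (B : Type) [Fintype B] where
  m : ℕ →₀ ℝ
  m_nonneg : ∀ t, 0 ≤ m t
  m_sum : (m.sum fun _ w => w) = 1
  cond : ℕ → B → ℝ
  cond_dist : ∀ t, IsDist (cond t)

/-- Marginal of a Ĝ-conjecture on the co-player's actions. -/
noncomputable def margAct {B : Type} [Fintype B] (μ : GConj B) : B → ℝ :=
  fun b => μ.m.sum fun t w => w * μ.cond t b

/-- (K1): conditional on the co-player being of type 0 (if deemed possible),
play follows the anchor `q`. -/
def K1 {B : Type} [Fintype B] (q : B → ℝ) (μ : GConj B) : Prop :=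
  μ.m 0 ≠ 0 → μ.cond 0 = q

/-- (K2): only co-player types strictly below `k` are deemed possible. -/
def K2 {B : Type} [Fintype B] (k : ℕ) (μ : GConj B) : Prop :=
  ∀ t, μ.m t ≠ 0 → t < k

/-- (KL): only the co-player type `k - 1` is deemed possible. -/
def KL {B : Type} [Fintype B] (k : ℕ) (μ : GConj B) : Prop :=
  ∀ t, μ.m t ≠ 0 → t = k - 1

/-- Truncation `f^k` of the level distribution `f` at `k`. -/
noncomputable def ftrunc (f : ℕ → ℝ) (k t : ℕ) : ℝ :=
  f t / ∑ t' ∈ Finset.range k, f t'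

/-- (KC): the type-marginal equals the truncation of `f` at `k`. -/
def KC {B : Type} [Fintype B] (f : ℕ → ℝ) (k : ℕ) (μ : GConj B) : Prop :=
  ∀ t < k, μ.m t = ftrunc f k t

/-- A full-support level distribution on ℕ. -/
def FullDist (f : ℕ → ℝ) : Prop :=
  (∀ t, 0 < f t) ∧ HasSum f 1

/-- One step of Δ-rationalizability for one player, under belief restrictions `Δ`
(type-0 pairs always survive, since type-0 payoffs are constant). -/
def Dstep {A B : Type} [Fintype A] [Fintype B] (u : A → B → ℝ)
    (Δ : ℕ → GConj B → Prop) (S : Set (ℕ × A)) (T : Set (ℕ × B)) : Set (ℕ × A) :=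
  {x | x ∈ S ∧ (x.1 = 0 ∨ ∃ μ : GConj B, Δ x.1 μ ∧
      (∀ t b, μ.m t ≠ 0 → μ.cond t b ≠ 0 → (t, b) ∈ T) ∧ isBR u (margAct μ) x.2)}

/-- Δ-rationalizability in the derived game with payoff uncertainty. -/
def DeltaRat {A B : Type} [Fintype A] [Fintype B] (u1 : A → B → ℝ) (u2 : B → A → ℝ)
    (Δ1 : ℕ → GConj B → Prop) (Δ2 : ℕ → GConj A → Prop) :
    ℕ → Set (ℕ × A) × Set (ℕ × B)
  | 0 => (Set.univ, Set.univ)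
  | n + 1 =>
    (Dstep u1 Δ1 (DeltaRat u1 u2 Δ1 Δ2 n).1 (DeltaRat u1 u2 Δ1 Δ2 n).2,
     Dstep u2 Δ2 (DeltaRat u1 u2 Δ1 Δ2 n).2 (DeltaRat u1 u2 Δ1 Δ2 n).1)

/-- Belief restrictions for downward rationalizability: (K1) and (K2). -/
def DownR {B : Type} [Fintype B] (q : B → ℝ) : ℕ → GConj B → Prop :=
  fun k μ => K1 q μ ∧ K2 k μ

/-- Belief restrictions for L-rationalizability: (K1), (K2) and (KL). -/
def LR {B : Type} [Fintype B] (q : B → ℝ) : ℕ → GConj B → Prop :=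
  fun k μ => K1 q μ ∧ K2 k μ ∧ KL k μ

/-- Belief restrictions for C-rationalizability: (K1), (K2) and (KC). -/
def CR {B : Type} [Fintype B] (q : B → ℝ) (f : ℕ → ℝ) : ℕ → GConj B → Prop :=
  fun k μ => K1 q μ ∧ K2 k μ ∧ KC f k μ

section Sets

variable {A B : Type} [Fintype A] [Fintype B]

/-- `n`-downward-rationalizable actions of player 1's type `θ_{1,k}`. -/
def DSet (u1 : A → B → ℝ) (u2 : B → A → ℝ) (p1 : A → ℝ) (p2 : B → ℝ) (n k : ℕ) : Set A :=
  {a | (k, a) ∈ (DeltaRat u1 u2 (DownR p2) (DownR p1) n).1}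

/-- `n`-downward-rationalizable actions of player 2's type `θ_{2,k}`. -/
def DSet2 (u1 : A → B → ℝ) (u2 : B → A → ℝ) (p1 : A → ℝ) (p2 : B → ℝ) (n k : ℕ) : Set B :=
  {b | (k, b) ∈ (DeltaRat u1 u2 (DownR p2) (DownR p1) n).2}

def DSetInf (u1 : A → B → ℝ) (u2 : B → A → ℝ) (p1 : A → ℝ) (p2 : B → ℝ) (k : ℕ) : Set A :=
  ⋂ n, DSet u1 u2 p1 p2 n k

def DSet2Inf (u1 : A → B → ℝ) (u2 : B → A → ℝ) (p1 : A → ℝ) (p2 : B → ℝ) (k : ℕ) : Set B :=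
  ⋂ n, DSet2 u1 u2 p1 p2 n k

/-- `n`-L-rationalizable actions of player 1's type `θ_{1,k}`. -/
def LSet (u1 : A → B → ℝ) (u2 : B → A → ℝ) (p1 : A → ℝ) (p2 : B → ℝ) (n k : ℕ) : Set A :=
  {a | (k, a) ∈ (DeltaRat u1 u2 (LR p2) (LR p1) n).1}

/-- `n`-L-rationalizable actions of player 2's type `θ_{2,k}`. -/
def LSet2 (u1 : A → B → ℝ) (u2 : B → A → ℝ) (p1 : A → ℝ) (p2 : B → ℝ) (n k : ℕ) : Set B :=
  {b | (k, b) ∈ (DeltaRat u1 u2 (LR p2) (LR p1) n).2}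

def LSetInf (u1 : A → B → ℝ) (u2 : B → A → ℝ) (p1 : A → ℝ) (p2 : B → ℝ) (k : ℕ) : Set A :=
  ⋂ n, LSet u1 u2 p1 p2 n k

def LSet2Inf (u1 : A → B → ℝ) (u2 : B → A → ℝ) (p1 : A → ℝ) (p2 : B → ℝ) (k : ℕ) : Set B :=
  ⋂ n, LSet2 u1 u2 p1 p2 n k

/-- `n`-C-rationalizable actions of player 1's type `θ_{1,k}`. -/
def CSet (u1 : A → B → ℝ) (u2 : B → A → ℝ) (p1 : A → ℝ) (p2 : B → ℝ) (f : ℕ → ℝ)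
    (n k : ℕ) : Set A :=
  {a | (k, a) ∈ (DeltaRat u1 u2 (CR p2 f) (CR p1 f) n).1}

/-- `n`-C-rationalizable actions of player 2's type `θ_{2,k}`. -/
def CSet2 (u1 : A → B → ℝ) (u2 : B → A → ℝ) (p1 : A → ℝ) (p2 : B → ℝ) (f : ℕ → ℝ)
    (n k : ℕ) : Set B :=
  {b | (k, b) ∈ (DeltaRat u1 u2 (CR p2 f) (CR p1 f) n).2}

/-- The Cognitive Hierarchy solution: `CHsol … k` is CH level-`k` behavior (`k ≥ 1`). -/
def CHsol (u1 : A → B → ℝ) (u2 : B → A → ℝ) (p1 : A → ℝ) (p2 : B → ℝ) (f : ℕ → ℝ) :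
    ℕ → Set A × Set B
  | 0 => (Set.univ, Set.univ)
  | 1 => ({a | isBR u1 p2 a}, {b | isBR u2 p1 b})
  | k + 2 =>
    ({a | ∃ μ : GConj B, K2 (k + 2) μ ∧ KC f (k + 2) μ ∧ K1 p2 μ ∧
        (∀ t, 0 < t → ∀ _ : t < k + 2, ∀ b, μ.m t ≠ 0 → μ.cond t b ≠ 0 →
          b ∈ (CHsol u1 u2 p1 p2 f t).2) ∧
        isBR u1 (margAct μ) a},
     {b | ∃ μ : GConj A, K2 (k + 2) μ ∧ KC f (k + 2) μ ∧ K1 p1 μ ∧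
        (∀ t, 0 < t → ∀ _ : t < k + 2, ∀ a, μ.m t ≠ 0 → μ.cond t a ≠ 0 →
          a ∈ (CHsol u1 u2 p1 p2 f t).1) ∧
        isBR u2 (margAct μ) b})
  termination_by k => k

end Sets


section AuxLemmas

open scoped Classical

variable {A B : Type} [Fintype A] [Fintype B]

lemma isBR_exists [Nonempty A] (u : A → B → ℝ) (ν : B → ℝ) : ∃ a, isBR u ν a := by
  obtain ⟨a, -, ha⟩ := Finset.exists_max_image (Finset.univ : Finset A)
    (fun a => ∑ b, ν b * u a b) ⟨Classical.arbitrary A, Finset.mem_univ _⟩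
  exact ⟨a, fun a' => ha a' (Finset.mem_univ _)⟩

lemma pointMass_dist (b : B) : IsDist (fun b' => if b' = b then (1:ℝ) else 0) := by
  refine ⟨fun b' => ?_, by simp⟩
  by_cases h : b' = b <;> simp [h]

lemma BRstep_mono (u : A → B → ℝ) {S S' : Set A} {T T' : Set B} (hS : S' ⊆ S) (hT : T' ⊆ T) :
    BRstep u S' T' ⊆ BRstep u S T := by
  rintro a ⟨haS, ν, hν, hsupp, hbr⟩
  exact ⟨hS haS, ν, hν, fun b hb => hT (hsupp b hb), hbr⟩

lemma Rseq_antitone (u1 : A → B → ℝ) (u2 : B → A → ℝ) :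
    ∀ n, (Rseq u1 u2 (n+1)).1 ⊆ (Rseq u1 u2 n).1 ∧ (Rseq u1 u2 (n+1)).2 ⊆ (Rseq u1 u2 n).2 := by
  intro n
  induction n with
  | zero => exact ⟨Set.subset_univ _, Set.subset_univ _⟩
  | succ n ih => exact ⟨BRstep_mono _ ih.1 ih.2, BRstep_mono _ ih.2 ih.1⟩

lemma br_mem_R1 (u1 : A → B → ℝ) (u2 : B → A → ℝ) :
    ∀ (n : ℕ) (a : A) (ν : B → ℝ), IsDist ν → (∀ b, ν b ≠ 0 → b ∈ (Rseq u1 u2 n).2) →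
      isBR u1 ν a → a ∈ (Rseq u1 u2 (n+1)).1 := by
  intro n
  induction n with
  | zero =>
      intro a ν hν hsupp hbr
      exact ⟨Set.mem_univ a, ν, hν, fun b _ => Set.mem_univ b, hbr⟩
  | succ n ih =>
      intro a ν hν hsupp hbr
      have ha : a ∈ (Rseq u1 u2 (n+1)).1 :=
        ih a ν hν (fun b hb => (Rseq_antitone u1 u2 n).2 (hsupp b hb)) hbr
      exact ⟨ha, ν, hν, hsupp, hbr⟩

lemma Rseq_swap (u1 : A → B → ℝ) (u2 : B → A → ℝ) :
    ∀ n, Rseq u2 u1 n = ((Rseq u1 u2 n).2, (Rseq u1 u2 n).1) := by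
  intro n
  induction n with
  | zero => rfl
  | succ n ih => simp [Rseq, ih]

lemma Lk_swap (u1 : A → B → ℝ) (u2 : B → A → ℝ) (p1 : A → ℝ) (p2 : B → ℝ) :
    ∀ k, Lk u2 u1 p2 p1 k = ((Lk u1 u2 p1 p2 k).2, (Lk u1 u2 p1 p2 k).1)
  | 0 => rfl
  | 1 => rfl
  | (k+2) => by
      have ih := Lk_swap u1 u2 p1 p2 (k+1)
      simp [Lk, ih]

lemma DeltaRat_swap (u1 : A → B → ℝ) (u2 : B → A → ℝ)
    (Δ1 : ℕ → GConj B → Prop) (Δ2 : ℕ → GConj A → Prop) :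
    ∀ n, DeltaRat u2 u1 Δ2 Δ1 n = ((DeltaRat u1 u2 Δ1 Δ2 n).2, (DeltaRat u1 u2 Δ1 Δ2 n).1) := by
  intro n
  induction n with
  | zero => rfl
  | succ n ih => simp [DeltaRat, ih]

lemma LSet2_eq (u1 : A → B → ℝ) (u2 : B → A → ℝ) (p1 : A → ℝ) (p2 : B → ℝ) (n k : ℕ) :
    LSet2 u1 u2 p1 p2 n k = LSet u2 u1 p2 p1 n k := by
  ext b
  simp [LSet, LSet2, DeltaRat_swap u1 u2 (LR p2) (LR p1) n]

lemma type0_mem (u1 : A → B → ℝ) (u2 : B → A → ℝ)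
    (Δ1 : ℕ → GConj B → Prop) (Δ2 : ℕ → GConj A → Prop) :
    ∀ n, (∀ a : A, (0, a) ∈ (DeltaRat u1 u2 Δ1 Δ2 n).1) ∧
         (∀ b : B, (0, b) ∈ (DeltaRat u1 u2 Δ1 Δ2 n).2) := by
  intro n
  induction n with
  | zero => exact ⟨fun a => Set.mem_univ _, fun b => Set.mem_univ _⟩
  | succ n ih => exact ⟨fun a => ⟨ih.1 a, Or.inl rfl⟩, fun b => ⟨ih.2 b, Or.inl rfl⟩⟩

noncomputable def singleConj (t0 : ℕ) (ν : B → ℝ) (hν : IsDist ν) : GConj B where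
  m := Finsupp.single t0 1
  m_nonneg := fun t => by
    classical
    rw [Finsupp.single_apply]
    split <;> norm_num
  m_sum := by simp [Finsupp.sum_single_index]
  cond := fun _ => ν
  cond_dist := fun _ => hν

lemma margAct_singleConj (t0 : ℕ) (ν : B → ℝ) (hν : IsDist ν) :
    margAct (singleConj t0 ν hν) = ν := by
  funext b
  simp [margAct, singleConj, Finsupp.sum_single_index]

lemma single_support {t0 t : ℕ} (h : (Finsupp.single t0 (1:ℝ)) t ≠ 0) : t = t0 := by
  by_contra hne
  exact h (Finsupp.single_eq_of_ne' (Ne.symm hne))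

lemma KL_sum {k : ℕ} (μ : GConj B) (hKL : KL k μ)
    (g : ℕ → ℝ → ℝ) (hg : ∀ t, g t 0 = 0) : μ.m.sum g = g (k-1) (μ.m (k-1)) := by
  have hsupp : μ.m.support ⊆ {k-1} := by
    intro t ht
    rw [Finsupp.mem_support_iff] at ht
    simp [hKL t ht]
  rw [Finsupp.sum, Finset.sum_subset hsupp (fun t _ ht => by
    rw [Finsupp.notMem_support_iff] at ht
    rw [ht]; exact hg t), Finset.sum_singleton]

lemma KL_m (k : ℕ) (μ : GConj B) (hKL : KL k μ) : μ.m (k-1) = 1 := by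
  have h := μ.m_sum
  rwa [KL_sum μ hKL (fun _ w => w) (fun _ => rfl)] at h

lemma KL_margAct (k : ℕ) (μ : GConj B) (hKL : KL k μ) : margAct μ = μ.cond (k-1) := by
  funext b
  rw [margAct, KL_sum μ hKL (fun t w => w * μ.cond t b) (fun t => zero_mul _), KL_m k μ hKL, one_mul]

lemma exists_mu_iff_one (u : A → B → ℝ) (q : B → ℝ) (hq : IsDist q)
    (T : Set (ℕ × B)) (hT0 : ∀ b : B, (0, b) ∈ T) (a : A) :
    (∃ μ : GConj B, LR q 1 μ ∧ (∀ t b, μ.m t ≠ 0 → μ.cond t b ≠ 0 → (t, b) ∈ T) ∧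
      isBR u (margAct μ) a) ↔ isBR u q a := by
  constructor
  · rintro ⟨μ, ⟨hK1, hK2, hKL⟩, hsupp, hbr⟩
    have hm : μ.m 0 = 1 := KL_m 1 μ hKL
    have hc : μ.cond 0 = q := hK1 (by rw [hm]; norm_num)
    rwa [KL_margAct 1 μ hKL, hc] at hbr
  · intro hbr
    refine ⟨singleConj 0 q hq, ⟨fun _ => rfl, ?_, ?_⟩, ?_, ?_⟩
    · intro t ht
      have := single_support ht
      omega
    · intro t ht
      exact single_support ht
    · intro t b ht hb
      have h0 : t = 0 := single_support ht
      rw [h0]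
      exact hT0 b
    · rwa [margAct_singleConj]

lemma exists_mu_iff_ge2 (u : A → B → ℝ) (q : B → ℝ) (k : ℕ) (hk : 2 ≤ k)
    (T : Set (ℕ × B)) (a : A) :
    (∃ μ : GConj B, LR q k μ ∧ (∀ t b, μ.m t ≠ 0 → μ.cond t b ≠ 0 → (t, b) ∈ T) ∧
      isBR u (margAct μ) a) ↔ a ∈ Lstep u {b | (k-1, b) ∈ T} := by
  constructor
  · rintro ⟨μ, ⟨hK1, hK2, hKL⟩, hsupp, hbr⟩
    refine ⟨μ.cond (k-1), μ.cond_dist (k-1), ?_, ?_⟩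
    · intro b hb
      exact hsupp (k-1) b (by rw [KL_m k μ hKL]; norm_num) hb
    · rwa [KL_margAct k μ hKL] at hbr
  · rintro ⟨ν, hν, hsupp, hbr⟩
    refine ⟨singleConj (k-1) ν hν, ⟨?_, ?_, ?_⟩, ?_, ?_⟩
    · intro h0
      exact absurd (Finsupp.single_eq_of_ne' (by omega : k - 1 ≠ 0)) h0
    · intro t ht
      have := single_support ht
      omega
    · intro t ht
      exact single_support ht
    · intro t b ht hb
      have h0 : t = k - 1 := single_support ht
      rw [h0]
      exact hsupp b hb
    · rwa [margAct_singleConj]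

lemma Lk_subset_R (u1 : A → B → ℝ) (u2 : B → A → ℝ) (p1 : A → ℝ) (p2 : B → ℝ)
    (hp1 : IsDist p1) (hp2 : IsDist p2) :
    ∀ k, (Lk u1 u2 p1 p2 k).1 ⊆ (Rseq u1 u2 k).1 ∧ (Lk u1 u2 p1 p2 k).2 ⊆ (Rseq u1 u2 k).2
  | 0 => ⟨subset_rfl, subset_rfl⟩
  | 1 => by
      constructor
      · intro a ha
        exact br_mem_R1 u1 u2 0 a p2 hp2 (fun b _ => Set.mem_univ b) ha
      · intro b hb
        have h := br_mem_R1 u2 u1 0 b p1 hp1 (fun a _ => Set.mem_univ a) hb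
        rw [Rseq_swap u1 u2 1] at h
        exact h
  | (k+2) => by
      have ih := Lk_subset_R u1 u2 p1 p2 hp1 hp2 (k+1)
      constructor
      · rintro a ⟨ν, hν, hsupp, hbr⟩
        exact br_mem_R1 u1 u2 (k+1) a ν hν (fun b hb => ih.2 (hsupp b hb)) hbr
      · rintro b ⟨ν, hν, hsupp, hbr⟩
        have h := br_mem_R1 u2 u1 (k+1) b ν hν
          (fun a ha => by rw [Rseq_swap u1 u2 (k+1)]; exact ih.1 (hsupp a ha)) hbr
        rw [Rseq_swap u1 u2 (k+2)] at h
        exact h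

lemma Lk_nonempty (u1 : A → B → ℝ) (u2 : B → A → ℝ) (p1 : A → ℝ) (p2 : B → ℝ)
    [Nonempty A] [Nonempty B] :
    ∀ k, (Lk u1 u2 p1 p2 k).1.Nonempty ∧ (Lk u1 u2 p1 p2 k).2.Nonempty
  | 0 => ⟨Set.univ_nonempty, Set.univ_nonempty⟩
  | 1 => ⟨isBR_exists u1 p2, isBR_exists u2 p1⟩
  | (k+2) => by
      obtain ⟨⟨a1, ha1⟩, ⟨b1, hb1⟩⟩ := Lk_nonempty u1 u2 p1 p2 (k+1)
      constructor
      · obtain ⟨a, ha⟩ := isBR_exists u1 (fun b => if b = b1 then (1:ℝ) else 0)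
        refine ⟨a, ⟨_, pointMass_dist b1, fun b hb => ?_, ha⟩⟩
        by_cases h : b = b1
        · rw [h]; exact hb1
        · simp [h] at hb
      · obtain ⟨b, hb⟩ := isBR_exists u2 (fun a => if a = a1 then (1:ℝ) else 0)
        refine ⟨b, ⟨_, pointMass_dist a1, fun a ha => ?_, hb⟩⟩
        by_cases h : a = a1
        · rw [h]; exact ha1
        · simp [h] at ha

lemma Lchar (n : ℕ) : ∀ {A B : Type} [Fintype A] [Fintype B]
    (u1 : A → B → ℝ) (u2 : B → A → ℝ) (p1 : A → ℝ) (p2 : B → ℝ),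
    IsDist p1 → IsDist p2 → ∀ k,
    LSet u1 u2 p1 p2 n k =
      (if n < k then (Rseq u1 u2 n).1 else (Lk u1 u2 p1 p2 k).1) := by
  induction n with
  | zero =>
      intro A B _ _ u1 u2 p1 p2 hp1 hp2 k
      match k with
      | 0 => simp [LSet, DeltaRat, Lk]
      | (k+1) => simp [LSet, DeltaRat, Rseq]
  | succ n ih =>
      intro A B _ _ u1 u2 p1 p2 hp1 hp2 k
      have hprev : ∀ k', LSet u1 u2 p1 p2 n k' =
          (if n < k' then (Rseq u1 u2 n).1 else (Lk u1 u2 p1 p2 k').1) :=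
        ih u1 u2 p1 p2 hp1 hp2
      have hprev2 : ∀ k', LSet2 u1 u2 p1 p2 n k' =
          (if n < k' then (Rseq u1 u2 n).2 else (Lk u1 u2 p1 p2 k').2) := by
        intro k'
        rw [LSet2_eq, ih u2 u1 p2 p1 hp2 hp1 k', Rseq_swap u1 u2 n, Lk_swap u1 u2 p1 p2 k']
      have hmem : ∀ (k' : ℕ) (a : A), a ∈ LSet u1 u2 p1 p2 (n+1) k' ↔
          a ∈ LSet u1 u2 p1 p2 n k' ∧ (k' = 0 ∨ ∃ μ : GConj B, LR p2 k' μ ∧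
            (∀ t b, μ.m t ≠ 0 → μ.cond t b ≠ 0 →
              (t, b) ∈ (DeltaRat u1 u2 (LR p2) (LR p1) n).2) ∧
            isBR u1 (margAct μ) a) := fun k' a => Iff.rfl
      match k with
      | 0 =>
          ext a
          rw [hmem 0 a, hprev 0]
          simp [Lk]
      | 1 =>
          ext a
          rw [hmem 1 a,
            exists_mu_iff_one u1 p2 hp2 _ (type0_mem u1 u2 (LR p2) (LR p1) n).2 a,
            hprev 1]
          simp only [Nat.one_ne_zero, false_or, Nat.not_lt_zero]
          by_cases hn0 : n < 1
          · have h0 : n = 0 := by omega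
            subst h0
            simp [Rseq, Lk]
          · simp [hn0, Lk]
      | (j+2) =>
          have hstep : ∀ a : A, a ∈ LSet u1 u2 p1 p2 (n+1) (j+2) ↔
              a ∈ LSet u1 u2 p1 p2 n (j+2) ∧
                a ∈ Lstep u1 (LSet2 u1 u2 p1 p2 n (j+1)) := by
            intro a
            rw [hmem (j+2) a, exists_mu_iff_ge2 u1 p2 (j+2) (by omega) _ a]
            simp only [Nat.succ_ne_zero, false_or]
            exact Iff.rfl
          ext a
          rw [hstep a, hprev (j+2), hprev2 (j+1)]
          by_cases h1 : n < j+1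
          · rw [if_pos h1, if_pos (by omega : n < j+2), if_pos (by omega : n+1 < j+2)]
            exact Iff.rfl
          · by_cases h2 : n < j+2
            · rw [if_pos h2, if_neg h1, if_neg (by omega : ¬ n+1 < j+2)]
              constructor
              · rintro ⟨-, h⟩; exact h
              · intro h
                refine ⟨?_, h⟩
                obtain ⟨ν, hν, hs, hb⟩ := h
                have hmemR : a ∈ (Rseq u1 u2 (j+2)).1 :=
                  br_mem_R1 u1 u2 (j+1) a ν hν
                    (fun b hb' => (Lk_subset_R u1 u2 p1 p2 hp1 hp2 (j+1)).2 (hs b hb')) hb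
                have hn' : n = j+1 := by omega
                rw [hn']
                exact (Rseq_antitone u1 u2 (j+1)).1 hmemR
            · rw [if_neg h2, if_neg h1, if_neg (by omega : ¬ n+1 < j+2)]
              constructor
              · rintro ⟨h, -⟩; exact h
              · intro h; exact ⟨h, h⟩

end AuxLemmas

/-- anchor irrelevance in dominance-solvable games: if iterated elimination
terminates at `nstar` with singleton sets, then for all anchors, all `n ≥ 1` and all
`k ≥ nstar`, the `n`-L-rationalizable actions of type `θ_{i,k}` equal `R^n_i`. -/
theorem anchor_irrelevance_dominance_solvable {A B : Type} [Fintype A] [Fintype B]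
    (u1 : A → B → ℝ) (u2 : B → A → ℝ) (nstar : ℕ)
    (hstab : ∀ n, nstar ≤ n → Rseq u1 u2 n = Rseq u1 u2 nstar)
    (hsing1 : ∃ a : A, (Rseq u1 u2 nstar).1 = {a})
    (hsing2 : ∃ b : B, (Rseq u1 u2 nstar).2 = {b})
    (p1 : A → ℝ) (p2 : B → ℝ) (hp1 : IsDist p1) (hp2 : IsDist p2)
    (n : ℕ) (hn : 1 ≤ n) (k : ℕ) (hk : nstar ≤ k) :
    LSet u1 u2 p1 p2 n k = (Rseq u1 u2 n).1 ∧
    LSet2 u1 u2 p1 p2 n k = (Rseq u1 u2 n).2 := by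
  obtain ⟨a0, ha0⟩ := hsing1
  obtain ⟨b0, hb0⟩ := hsing2
  haveI hA : Nonempty A := ⟨a0⟩
  haveI hB : Nonempty B := ⟨b0⟩
  have h1 := Lchar n u1 u2 p1 p2 hp1 hp2 k
  have h2 : LSet2 u1 u2 p1 p2 n k =
      (if n < k then (Rseq u1 u2 n).2 else (Lk u1 u2 p1 p2 k).2) := by
    rw [LSet2_eq, Lchar n u2 u1 p2 p1 hp2 hp1 k, Rseq_swap u1 u2 n, Lk_swap u1 u2 p1 p2 k]
  by_cases h : n < k
  · rw [h1, h2, if_pos h, if_pos h]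
    exact ⟨rfl, rfl⟩
  · have hkn : k ≤ n := not_lt.mp h
    have hRn : Rseq u1 u2 n = Rseq u1 u2 nstar := hstab n (le_trans hk hkn)
    have hRk : Rseq u1 u2 k = Rseq u1 u2 nstar := hstab k hk
    have hsub := Lk_subset_R u1 u2 p1 p2 hp1 hp2 k
    have hne := Lk_nonempty u1 u2 p1 p2 k
    constructor
    · rw [h1, if_neg h, hRn, ha0]
      have hs : (Lk u1 u2 p1 p2 k).1 ⊆ {a0} := by
        rw [← ha0, ← hRk]; exact hsub.1
      rcases Set.subset_singleton_iff_eq.mp hs with he | he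
      · exact absurd he (Set.nonempty_iff_ne_empty.mp hne.1)
      · exact he
    · rw [h2, if_neg h, hRn, hb0]
      have hs : (Lk u1 u2 p1 p2 k).2 ⊆ {b0} := by
        rw [← hb0, ← hRk]; exact hsub.2
      rcases Set.subset_singleton_iff_eq.mp hs with he | he
      · exact absurd he (Set.nonempty_iff_ne_empty.mp hne.2)
      · exact he
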